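/- Let (M^n, g) be a compact and connected Riemannian manifold of dimension n ≥ 2. Suppose there exists a non-trivial pair (ψ, α), where ψ is a smooth function and α is a 1-form, such that L_α g = ψ g (i.e. α is a conformal Killing 1-form with conformal factor ψ). If α is closed (dα = 0), then α ∧ dψ = 0, i.e. the 1-forms α and dψ are pointwise linearly dependent. -/

import Mathlib

noncomputable section

open scoped Manifold
open Metric Module Finset

/-- The Euclidean model space `ℝⁿ`. -/
abbrev Euc (n : ℕ) : Type := EuclideanSpace ℝ (Fin n)

/-- Directional derivative of a real valued function on a manifold along a
(trivialized) vector field, via `mfderiv`. -/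
def dDeriv {n : ℕ} {M : Type} [TopologicalSpace M] [ChartedSpace (Euc n) M]
    (f : M → ℝ) (X : M → Euc n) (x : M) : ℝ :=
  mfderiv (𝓡 n) 𝓘(ℝ) f x (X x)

/-- Smoothness of a (trivialized) vector field. -/
def SmoothVF {n : ℕ} {M : Type} [TopologicalSpace M] [ChartedSpace (Euc n) M]
    (X : M → Euc n) : Prop :=
  ContMDiff (𝓡 n) 𝓘(ℝ, Euc n) (⊤ : ℕ∞) X

/-- Smoothness of a real valued function. -/
def SmoothFn {n : ℕ} {M : Type} [TopologicalSpace M] [ChartedSpace (Euc n) M]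
    (f : M → ℝ) : Prop :=
  ContMDiff (𝓡 n) 𝓘(ℝ) (⊤ : ℕ∞) f

/-- A Riemannian structure on a manifold `M` modelled on `ℝⁿ`, presented through a
(trivialized) tangent bundle `M × ℝⁿ`: a smooth metric `g`, its Levi-Civita
connection `conn` (characterized by being torsion free and metric), the Ricci
curvature `ric`, the scalar curvature `scal` and the positive Laplacian `lapl`
(the latter three characterized via `g`-orthonormal bases). -/
structure RiemannStructure (n : ℕ) (M : Type) [TopologicalSpace M]
    [ChartedSpace (Euc n) M] : Type where
  /-- the Riemannian metric -/
  g : M → Euc n → Euc n → ℝ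
  g_symm : ∀ x u v, g x u v = g x v u
  g_add_left : ∀ x u v w, g x (u + v) w = g x u w + g x v w
  g_smul_left : ∀ x (a : ℝ) u v, g x (a • u) v = a * g x u v
  g_posdef : ∀ x u, u ≠ 0 → 0 < g x u u
  g_smooth : ∀ X Y : M → Euc n, SmoothVF (n := n) X → SmoothVF (n := n) Y →
    SmoothFn (n := n) (fun x => g x (X x) (Y x))
  /-- the Levi-Civita covariant derivative on vector fields -/
  conn : (M → Euc n) → (M → Euc n) → M → Euc n
  conn_smooth : ∀ X Y, SmoothVF (n := n) X → SmoothVF (n := n) Y → SmoothVF (n := n) (conn X Y)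
  conn_tensor_fst : ∀ X X' Y x, X x = X' x → conn X Y x = conn X' Y x
  conn_add_fst : ∀ X X' Y x, conn (X + X') Y x = conn X Y x + conn X' Y x
  conn_add_snd : ∀ X Y Y', SmoothVF (n := n) Y → SmoothVF (n := n) Y' → ∀ x,
    conn X (Y + Y') x = conn X Y x + conn X Y' x
  conn_smul_fst : ∀ (f : M → ℝ) X Y x, conn (fun p => f p • X p) Y x = f x • conn X Y x
  conn_leibniz : ∀ (f : M → ℝ) X Y, SmoothFn (n := n) f → SmoothVF (n := n) Y → ∀ x,
    conn X (fun p => f p • Y p) x = dDeriv (n := n) f X x • Y x + f x • conn X Y x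
  /-- `∇` is torsion free : `∇_X Y - ∇_Y X = [X,Y]` acts on functions as the commutator -/
  conn_torsion_free : ∀ (f : M → ℝ) X Y, SmoothFn (n := n) f → SmoothVF (n := n) X → SmoothVF (n := n) Y → ∀ x,
    dDeriv (n := n) f (fun p => conn X Y p - conn Y X p) x
      = dDeriv (n := n) (dDeriv (n := n) f Y) X x - dDeriv (n := n) (dDeriv (n := n) f X) Y x
  /-- `∇` is metric : `X ⬝ g(Y,Z) = g(∇_X Y, Z) + g(Y, ∇_X Z)` -/
  conn_metric : ∀ X Y Z, SmoothVF (n := n) X → SmoothVF (n := n) Y → SmoothVF (n := n) Z → ∀ x,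
    dDeriv (n := n) (fun p => g p (Y p) (Z p)) X x
      = g x (conn X Y x) (Z x) + g x (Y x) (conn X Z x)
  /-- `g`-orthonormal bases exist at every point -/
  onb_exists : ∀ x : M, ∃ b : Fin n → Euc n,
    ∀ i j, g x (b i) (b j) = if i = j then (1 : ℝ) else 0
  /-- the Ricci curvature (as a pointwise 2-tensor) -/
  ric : M → Euc n → Euc n → ℝ
  /-- `Ric(X,Y) = ∑ᵢ g(R(eᵢ,X)Y, eᵢ)` for any `g`-orthonormal basis,
  where `R(X,Y)Z = ∇_X ∇_Y Z - ∇_Y ∇_X Z - ∇_[X,Y] Z` -/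
  ric_spec : ∀ (x : M) (b : Fin n → Euc n),
    (∀ i j, g x (b i) (b j) = if i = j then (1 : ℝ) else 0) →
    ∀ X Y : M → Euc n, SmoothVF (n := n) X → SmoothVF (n := n) Y →
    ric x (X x) (Y x) = ∑ i : Fin n,
      g x (conn (fun _ => b i) (conn X Y) x - conn X (conn (fun _ => b i) Y) x
        - conn (fun p => conn (fun _ => b i) X p - conn X (fun _ => b i) p) Y x) (b i)
  /-- the scalar curvature -/
  scal : M → ℝ
  scal_spec : ∀ (x : M) (b : Fin n → Euc n),
    (∀ i j, g x (b i) (b j) = if i = j then (1 : ℝ) else 0) →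
    scal x = ∑ i : Fin n, ric x (b i) (b i)
  /-- the positive Laplacian `Δ f = - tr_g Hess f` -/
  lapl : (M → ℝ) → M → ℝ
  lapl_spec : ∀ (f : M → ℝ), SmoothFn (n := n) f → ∀ (x : M) (b : Fin n → Euc n),
    (∀ i j, g x (b i) (b j) = if i = j then (1 : ℝ) else 0) →
    lapl f x = -∑ i : Fin n,
      (dDeriv (n := n) (dDeriv (n := n) f (fun _ => b i)) (fun _ => b i) x
        - dDeriv (n := n) f (conn (fun _ => b i) (fun _ => b i)) x)

namespace RiemannStructure

variable {n : ℕ} {M : Type} [TopologicalSpace M] [ChartedSpace (Euc n) M]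
  (G : RiemannStructure n M)

/-- The Riemann curvature operator `R(X,Y)Z = ∇_X ∇_Y Z - ∇_Y ∇_X Z - ∇_[X,Y] Z`. -/
def curv (X Y Z : M → Euc n) : M → Euc n := fun x =>
  G.conn X (G.conn Y Z) x - G.conn Y (G.conn X Z) x
    - G.conn (fun p => G.conn X Y p - G.conn Y X p) Z x

/-- The Hessian of a function, `Hess f (X,Y) = X ⬝ (Y ⬝ f) - (∇_X Y) ⬝ f`. -/
def hess (f : M → ℝ) (X Y : M → Euc n) : M → ℝ := fun x =>
  dDeriv (n := n) (dDeriv (n := n) f Y) X x - dDeriv (n := n) f (G.conn X Y) x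

/-- The operator `U_g^* (f) = Hess f - f Ric + (Δ f) g`. -/
def Ustar (f : M → ℝ) (X Y : M → Euc n) : M → ℝ := fun x =>
  G.hess f X Y x - f x * G.ric x (X x) (Y x) + G.lapl f x * G.g x (X x) (Y x)

/-- Covariant derivative of a 2-tensor along `X` :
`(∇_X S)(Y,Z) = X ⬝ S(Y,Z) - S(∇_X Y, Z) - S(Y, ∇_X Z)`. -/
def cov2 (S : (M → Euc n) → (M → Euc n) → M → ℝ) (X Y Z : M → Euc n) : M → ℝ := fun x =>
  dDeriv (n := n) (fun p => S Y Z p) X x - S (G.conn X Y) Z x - S Y (G.conn X Z) x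

/-- `d^∇ S (X,Y,Z) = (∇_X S)(Y,Z) - (∇_Y S)(X,Z)`. -/
def dnabla (S : (M → Euc n) → (M → Euc n) → M → ℝ) (X Y Z : M → Euc n) : M → ℝ := fun x =>
  G.cov2 S X Y Z x - G.cov2 S Y X Z x

/-- The Ricci curvature as a 2-tensor on vector fields. -/
def ricT : (M → Euc n) → (M → Euc n) → M → ℝ := fun X Y x => G.ric x (X x) (Y x)

/-- The Lie derivative of the metric along (the vector field dual to) a one-form `A` :
`(L_A g)(X,Y) = g(∇_X A, Y) + g(∇_Y A, X)`. -/
def lieg (A X Y : M → Euc n) : M → ℝ := fun x =>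
  G.g x (G.conn X A x) (Y x) + G.g x (G.conn Y A x) (X x)

end RiemannStructure

/- Idea: closedness and `L_α g = ψ g` together say `∇α = (ψ/2) g`. Hence `f = |α|²` has
`df = ψ α` and `Hess f = dψ ⊗ α + (ψ²/2) g`; the symmetry of the Hessian (torsion freeness)
then forces `dψ ⊗ α` to be symmetric, i.e. `α ∧ dψ = 0`. -/

section dDeriv

variable {n : ℕ} {M : Type} [TopologicalSpace M] [ChartedSpace (Euc n) M]

lemma smoothVF_const (v : Euc n) : SmoothVF (n := n) (fun _ : M => v) := contMDiff_const

lemma SmoothFn.mdifferentiableAt {f : M → ℝ} (hf : SmoothFn (n := n) f) (x : M) :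
    MDifferentiableAt (𝓡 n) 𝓘(ℝ) f x :=
  ContMDiff.mdifferentiableAt hf (by simp)

lemma dDeriv_sub_field (f : M → ℝ) (X Y : M → Euc n) (x : M) :
    dDeriv (n := n) f (fun p => X p - Y p) x = dDeriv (n := n) f X x - dDeriv (n := n) f Y x :=
  map_sub _ _ _

lemma dDeriv_mul {u v : M → ℝ} {x : M} (hu : MDifferentiableAt (𝓡 n) 𝓘(ℝ) u x)
    (hv : MDifferentiableAt (𝓡 n) 𝓘(ℝ) v x) (X : M → Euc n) :
    dDeriv (n := n) (fun p => u p * v p) X x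
      = u x * dDeriv (n := n) v X x + dDeriv (n := n) u X x * v x := by
  change mfderiv (𝓡 n) 𝓘(ℝ) (u * v) x (X x) = _
  rw [(hu.hasMFDerivAt.mul' hv.hasMFDerivAt).mfderiv]
  rfl

end dDeriv

namespace RiemannStructure

variable {n : ℕ} {M : Type} [TopologicalSpace M] [ChartedSpace (Euc n) M]
  (G : RiemannStructure n M)

lemma hess_symm {f : M → ℝ} (hf : SmoothFn (n := n) f) {X Y : M → Euc n}
    (hX : SmoothVF (n := n) X) (hY : SmoothVF (n := n) Y) (x : M) :
    G.hess f X Y x = G.hess f Y X x := by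
  have h := G.conn_torsion_free f X Y hf hX hY x
  rw [dDeriv_sub_field] at h
  simp only [hess]
  linarith

lemma g_conn_eq_of_lieg_of_closed {ψ : M → ℝ} {A : M → Euc n}
    (h_conf : ∀ X Y x, G.lieg A X Y x = ψ x * G.g x (X x) (Y x))
    (h_closed : ∀ (X Y : M → Euc n) x, G.g x (G.conn X A x) (Y x) = G.g x (G.conn Y A x) (X x))
    (X Y : M → Euc n) (x : M) :
    G.g x (G.conn X A x) (Y x) = ψ x / 2 * G.g x (X x) (Y x) := by
  have h := h_conf X Y x
  rw [lieg, ← h_closed X Y x] at h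
  linarith

section ClosedConformal

variable {G} {ψ : M → ℝ} {A : M → Euc n}

lemma dDeriv_g_self (hA : SmoothVF (n := n) A)
    (hψA : ∀ (X Y : M → Euc n) x, G.g x (G.conn X A x) (Y x) = ψ x / 2 * G.g x (X x) (Y x))
    (X : M → Euc n) (x : M) :
    dDeriv (n := n) (fun p => G.g p (A p) (A p)) X x = ψ x * G.g x (X x) (A x) := by
  have h := G.conn_metric (fun _ => X x) A A (smoothVF_const _) hA hA x
  rw [G.g_symm x (A x), hψA] at h
  change dDeriv (n := n) _ (fun _ => X x) x = _
  rw [h]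
  ring

lemma hess_g_self (hψ : SmoothFn (n := n) ψ) (hA : SmoothVF (n := n) A)
    (hψA : ∀ (X Y : M → Euc n) x, G.g x (G.conn X A x) (Y x) = ψ x / 2 * G.g x (X x) (Y x))
    {X Y : M → Euc n} (hX : SmoothVF (n := n) X) (hY : SmoothVF (n := n) Y) (x : M) :
    G.hess (fun p => G.g p (A p) (A p)) X Y x
      = dDeriv (n := n) ψ X x * G.g x (Y x) (A x) + ψ x ^ 2 / 2 * G.g x (X x) (Y x) := by
  have hdf : dDeriv (n := n) (fun p => G.g p (A p) (A p)) Y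
      = fun p => ψ p * G.g p (Y p) (A p) :=
    funext (dDeriv_g_self hA hψA Y)
  have hYA := G.g_smooth Y A hY hA
  rw [hess, hdf, dDeriv_g_self hA hψA,
    dDeriv_mul (hψ.mdifferentiableAt x) (hYA.mdifferentiableAt x), G.conn_metric X Y A hX hY hA x, G.g_symm x (Y x) (G.conn X A x), hψA]
  ring

end ClosedConformal

end RiemannStructure

theorem stmt0_general {n : ℕ} {M : Type} [TopologicalSpace M]
    [ChartedSpace (Euc n) M]
    (G : RiemannStructure n M)
    (ψ : M → ℝ) (hψs : SmoothFn (n := n) ψ)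
    (A : M → Euc n) (hAs : SmoothVF (n := n) A)
    -- `L_α g = ψ g`
    (h_conf : ∀ (X Y : M → Euc n) (x : M), G.lieg A X Y x = ψ x * G.g x (X x) (Y x))
    -- `α` is closed : `dα (X, Y) = g(∇_X A, Y) - g(∇_Y A, X) = 0`
    (h_closed : ∀ (X Y : M → Euc n) (x : M),
      G.g x (G.conn X A x) (Y x) = G.g x (G.conn Y A x) (X x)) :
    -- `(α ∧ dψ)(X, Y) = 0`
    ∀ (X Y : M → Euc n) (x : M),
      G.g x (A x) (X x) * dDeriv (n := n) ψ Y x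
        - G.g x (A x) (Y x) * dDeriv (n := n) ψ X x = 0 := by
  intro X Y x
  -- `dDeriv ψ X x` only sees `X x`, so we may pass to constant, hence smooth, fields.
  change G.g x (A x) (X x) * dDeriv (n := n) ψ (fun _ => Y x) x
    - G.g x (A x) (Y x) * dDeriv (n := n) ψ (fun _ => X x) x = 0
  have hψA := G.g_conn_eq_of_lieg_of_closed h_conf h_closed
  have hX := smoothVF_const (M := M) (X x)
  have hY := smoothVF_const (M := M) (Y x)
  have h := G.hess_symm (G.g_smooth A A hAs hAs) hX hY x
  rw [RiemannStructure.hess_g_self hψs hAs hψA hX hY,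
    RiemannStructure.hess_g_self hψs hAs hψA hY hX] at h
  rw [G.g_symm x (A x) (X x), G.g_symm x (A x) (Y x)]
  linear_combination -h + ψ x ^ 2 / 2 * G.g_symm x (X x) (Y x)

/-- On a compact connected Riemannian manifold of dimension `n ≥ 2`,
if `(ψ, α)` is a non-trivial pair with `L_α g = ψ g` and the conformal Killing form `α`
(identified with its dual vector field `A`) is closed, then `α ∧ dψ = 0`. -/
theorem stmt0 {n : ℕ} (hn : 2 ≤ n) {M : Type} [TopologicalSpace M] [T2Space M]
    [ChartedSpace (Euc n) M] [IsManifold (𝓡 n) (⊤ : ℕ∞) M]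
    [CompactSpace M] [ConnectedSpace M] (G : RiemannStructure n M)
    (ψ : M → ℝ) (hψs : SmoothFn (n := n) ψ)
    (A : M → Euc n) (hAs : SmoothVF (n := n) A)
    (h_nontrivial : ψ ≠ 0 ∨ A ≠ 0)
    -- `L_α g = ψ g`
    (h_conf : ∀ (X Y : M → Euc n) (x : M), G.lieg A X Y x = ψ x * G.g x (X x) (Y x))
    -- `α` is closed : `dα (X, Y) = g(∇_X A, Y) - g(∇_Y A, X) = 0`
    (h_closed : ∀ (X Y : M → Euc n) (x : M),
      G.g x (G.conn X A x) (Y x) = G.g x (G.conn Y A x) (X x)) :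
    -- `(α ∧ dψ)(X, Y) = 0`
    ∀ (X Y : M → Euc n) (x : M),
      G.g x (A x) (X x) * dDeriv (n := n) ψ Y x
        - G.g x (A x) (Y x) * dDeriv (n := n) ψ X x = 0 :=
  stmt0_general G ψ hψs A hAs h_conf h_closed

end
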